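/- For a single Pauli-rotation data encoding, the model function f(x) = ⟨0| W₁† G(x)† W₂† O W₂ G(x) W₁ |0⟩ with G(x) = exp(−i x σ_z / 2) acting on one qubit (tensored with identity elsewhere) can be written as f(x) = c₀ + c₁ cos(x) + c₂ sin(x) for real constants c₀, c₁, c₂ independent of x. -/

import Mathlib

/-!
Write `G(x) = cos (x/2) - i sin (x/2) Z` with `Z = σ_z ⊗ 1` and `M = W₂ᴴ O W₂`. Expanding and using
the half-angle formulas,
`G(x)ᴴ M G(x) = (M + ZMZ)/2 + cos x (M - ZMZ)/2 + sin x · i(ZM - MZ)/2`,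
and the three matrices on the right are Hermitian, so their expectation values in the state
`W₁ ψ₀` are real.
-/

open Matrix Kronecker

/-- The single-qubit Pauli-Z rotation data-encoding gate `G(x) = exp(-i x σ_z / 2)`,
tensored with the identity on the remaining qubits. -/
noncomputable def encodingGate (m : ℕ) (x : ℝ) : Matrix (Fin 2 × Fin m) (Fin 2 × Fin m) ℂ :=
  (!![Complex.exp (-Complex.I * x / 2), 0; 0, Complex.exp (Complex.I * x / 2)] :
      Matrix (Fin 2) (Fin 2) ℂ) ⊗ₖ (1 : Matrix (Fin m) (Fin m) ℂ)

section PauliRotation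

variable {n : Type*}

theorem Matrix.IsHermitian.kronecker {m α : Type*} [CommSemiring α] [StarRing α]
    {A : Matrix n n α} {B : Matrix m m α}
    (hA : A.IsHermitian) (hB : B.IsHermitian) : (A ⊗ₖ B).IsHermitian := by
  rw [IsHermitian, conjTranspose_kronecker, hA.eq, hB.eq]

theorem Matrix.IsHermitian.I_smul_commutator [Fintype n] {Z M : Matrix n n ℂ}
    (hZ : Z.IsHermitian) (hM : M.IsHermitian) : (Complex.I • (Z * M - M * Z)).IsHermitian := by
  simp only [IsHermitian, conjTranspose_smul, conjTranspose_sub, conjTranspose_mul, hZ.eq, hM.eq,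
    Complex.star_def, Complex.conj_I, neg_smul, ← smul_neg, neg_sub]

theorem Matrix.IsHermitian.ofReal_re_star_dotProduct_mulVec_self [Fintype n]
    {A : Matrix n n ℂ} (hA : A.IsHermitian) (v : n → ℂ) :
    (((star v ⬝ᵥ A *ᵥ v).re : ℝ) : ℂ) = star v ⬝ᵥ A *ᵥ v :=
  Complex.ext rfl (by simpa using (hA.im_star_dotProduct_mulVec_self v).symm)

theorem Matrix.star_dotProduct_conjTranspose_mul_mul_mulVec {m α : Type*} [Fintype m]
    [Fintype n] [CommSemiring α] [StarRing α] (W : Matrix m n α) (N : Matrix m m α)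
    (v : n → α) : star v ⬝ᵥ (Wᴴ * N * W) *ᵥ v = star (W *ᵥ v) ⬝ᵥ N *ᵥ (W *ᵥ v) := by
  rw [star_mulVec, ← dotProduct_mulVec, mulVec_mulVec, mulVec_mulVec, Matrix.mul_assoc]

variable [DecidableEq n]

/-- `exp (-i x Z / 2)` when `Z` is an involution. -/
noncomputable def pauliRotation (Z : Matrix n n ℂ) (x : ℝ) : Matrix n n ℂ :=
  (Real.cos (x / 2) : ℂ) • 1 - (Complex.I * Real.sin (x / 2)) • Z

theorem pauliRotation_kronecker_one {m : Type*} [DecidableEq m] (Z : Matrix n n ℂ) (x : ℝ) :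
    pauliRotation Z x ⊗ₖ (1 : Matrix m m ℂ) = pauliRotation (Z ⊗ₖ 1) x := by
  ext ⟨i, a⟩ ⟨j, b⟩
  simp only [pauliRotation, kronecker_apply, Matrix.sub_apply, Matrix.smul_apply, one_apply,
    Prod.ext_iff, ite_and, smul_eq_mul]
  split_ifs <;> ring

theorem conjTranspose_pauliRotation {Z : Matrix n n ℂ} (hZ : Z.IsHermitian) (x : ℝ) :
    (pauliRotation Z x)ᴴ = (Real.cos (x / 2) : ℂ) • 1 + (Complex.I * Real.sin (x / 2)) • Z := by
  simp only [pauliRotation, conjTranspose_sub, conjTranspose_smul, conjTranspose_one, hZ.eq,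
    star_mul', Complex.star_def, Complex.conj_ofReal, Complex.conj_I]
  module

variable [Fintype n]

theorem conjTranspose_pauliRotation_mul_mul {Z : Matrix n n ℂ} (hZ : Z.IsHermitian)
    (M : Matrix n n ℂ) (x : ℝ) :
    (pauliRotation Z x)ᴴ * M * pauliRotation Z x =
      (2⁻¹ : ℝ) • (M + Z * M * Z) + Real.cos x • (2⁻¹ : ℝ) • (M - Z * M * Z) +
        Real.sin x • (2⁻¹ : ℝ) • Complex.I • (Z * M - M * Z) := by
  obtain ⟨y, rfl⟩ : ∃ y, x = 2 * y := ⟨x / 2, by ring⟩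
  rw [conjTranspose_pauliRotation hZ, pauliRotation, mul_div_cancel_left₀ y two_ne_zero,
    Real.cos_two_mul, Real.sin_two_mul]
  -- one scalar ring and one normal form of `cos y`, `sin y` for `module` to compare coefficients
  simp only [← Complex.coe_smul]
  push_cast
  simp only [add_mul, mul_sub, smul_mul_assoc, mul_smul_comm, one_mul, mul_one, Matrix.mul_assoc]
  linear_combination (norm := module)
    (Complex.cos_sq_add_sin_sq (y : ℂ) - Complex.sin (y : ℂ) ^ 2 * Complex.I_sq) • (Z * (M * Z))

theorem exists_expectation_pauliRotation_eq {Z M : Matrix n n ℂ} (hZ : Z.IsHermitian)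
    (hM : M.IsHermitian) (v : n → ℂ) :
    ∃ c₀ c₁ c₂ : ℝ, ∀ x : ℝ,
      star v ⬝ᵥ ((pauliRotation Z x)ᴴ * M * pauliRotation Z x) *ᵥ v =
        (c₀ : ℂ) + (c₁ : ℂ) * (Real.cos x : ℝ) + (c₂ : ℂ) * (Real.sin x : ℝ) := by
  have hZMZ : (Z * M * Z).IsHermitian := by
    simpa [hZ.eq] using isHermitian_conjTranspose_mul_mul Z hM
  set A : Matrix n n ℂ := (2⁻¹ : ℝ) • (M + Z * M * Z)
  set B : Matrix n n ℂ := (2⁻¹ : ℝ) • (M - Z * M * Z)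
  set C : Matrix n n ℂ := (2⁻¹ : ℝ) • Complex.I • (Z * M - M * Z)
  have hA : A.IsHermitian := (hM.add hZMZ).smul (.all _)
  have hB : B.IsHermitian := (hM.sub hZMZ).smul (.all _)
  have hC : C.IsHermitian := (hZ.I_smul_commutator hM).smul (.all _)
  refine ⟨(star v ⬝ᵥ A *ᵥ v).re, (star v ⬝ᵥ B *ᵥ v).re, (star v ⬝ᵥ C *ᵥ v).re, fun x => ?_⟩
  rw [hA.ofReal_re_star_dotProduct_mulVec_self, hB.ofReal_re_star_dotProduct_mulVec_self,
    hC.ofReal_re_star_dotProduct_mulVec_self, conjTranspose_pauliRotation_mul_mul hZ]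
  simp only [A, B, C, add_mulVec, smul_mulVec, dotProduct_add, dotProduct_smul, Complex.real_smul]
  ring

end PauliRotation

def pauliZ : Matrix (Fin 2) (Fin 2) ℂ := !![1, 0; 0, -1]

theorem isHermitian_pauliZ : pauliZ.IsHermitian := by
  ext i j
  fin_cases i <;> fin_cases j <;> simp [pauliZ]

theorem pauliRotation_pauliZ (x : ℝ) : pauliRotation pauliZ x =
    !![Complex.exp (-Complex.I * x / 2), 0; 0, Complex.exp (Complex.I * x / 2)] := by
  rw [show -Complex.I * x / 2 = -(x / 2 : ℂ) * Complex.I by ring,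
    show Complex.I * x / 2 = (x / 2 : ℂ) * Complex.I by ring,
    ← Complex.cos_sub_sin_I, ← Complex.cos_add_sin_I]
  ext i j
  fin_cases i <;> fin_cases j <;> simp [pauliRotation, pauliZ, mul_comm Complex.I]

theorem encodingGate_eq_pauliRotation (m : ℕ) (x : ℝ) :
    encodingGate m x = pauliRotation (pauliZ ⊗ₖ (1 : Matrix (Fin m) (Fin m) ℂ)) x := by
  rw [encodingGate, ← pauliRotation_pauliZ, pauliRotation_kronecker_one]

theorem single_pauli_encoding_fourier_general (m : ℕ)
    (W₁ W₂ : Matrix (Fin 2 × Fin m) (Fin 2 × Fin m) ℂ)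
    (O : Matrix (Fin 2 × Fin m) (Fin 2 × Fin m) ℂ) (hO : O.IsHermitian)
    (ψ₀ : Fin 2 × Fin m → ℂ) :
    ∃ c₀ c₁ c₂ : ℝ, ∀ x : ℝ,
      star ψ₀ ⬝ᵥ
          ((W₁ᴴ * (encodingGate m x)ᴴ * W₂ᴴ * O * W₂ * encodingGate m x * W₁).mulVec ψ₀) =
        (c₀ : ℂ) + (c₁ : ℂ) * (Real.cos x : ℝ) + (c₂ : ℂ) * (Real.sin x : ℝ) := by
  obtain ⟨c₀, c₁, c₂, hc⟩ := exists_expectation_pauliRotation_eq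
    (isHermitian_pauliZ.kronecker (isHermitian_one (n := Fin m)))
    (isHermitian_conjTranspose_mul_mul W₂ hO) (W₁ *ᵥ ψ₀)
  refine ⟨c₀, c₁, c₂, fun x => ?_⟩
  rw [← hc x, ← star_dotProduct_conjTranspose_mul_mul_mulVec, encodingGate_eq_pauliRotation]
  simp only [Matrix.mul_assoc]

/-- A single Pauli-rotation encoding yields a model of the form
`c₀ + c₁ cos x + c₂ sin x`. -/
theorem single_pauli_encoding_fourier (m : ℕ)
    (W₁ W₂ : Matrix (Fin 2 × Fin m) (Fin 2 × Fin m) ℂ)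
    (hW₁ : W₁ ∈ Matrix.unitaryGroup (Fin 2 × Fin m) ℂ)
    (hW₂ : W₂ ∈ Matrix.unitaryGroup (Fin 2 × Fin m) ℂ)
    (O : Matrix (Fin 2 × Fin m) (Fin 2 × Fin m) ℂ) (hO : O.IsHermitian)
    (ψ₀ : Fin 2 × Fin m → ℂ) :
    ∃ c₀ c₁ c₂ : ℝ, ∀ x : ℝ,
      star ψ₀ ⬝ᵥ
          ((W₁ᴴ * (encodingGate m x)ᴴ * W₂ᴴ * O * W₂ * encodingGate m x * W₁).mulVec ψ₀) =
        (c₀ : ℂ) + (c₁ : ℂ) * (Real.cos x : ℝ) + (c₂ : ℂ) * (Real.sin x : ℝ) :=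
  single_pauli_encoding_fourier_general m W₁ W₂ O hO ψ₀
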